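/- arXiv:1401.2174 — 2 statements merged into one kernel-verified Lean document; each statement's English description precedes it below -/
import Mathlib

section
/- Let 𝔤 be a complex simple Lie algebra graded by a nonempty subset Σ of the simple roots. If dim 𝔤₋₁ = 2 (equivalently, if there are exactly two positive roots of Σ-height 1), then 𝔤 has rank 2. Equivalently: if rank 𝔤 ≥ 3, then for every nonempty subset Σ of the simple roots there are at least 3 positive roots of Σ-height 1. -/
open scoped RealInnerProductSpace BigOperators Classical

/-- A reduced crystallographic root system in a real inner product space,
together with a chosen base of simple roots and the coordinates of each
root with respect to the base. -/
structure RootSystemBase (V : Type*) [NormedAddCommGroup V] [InnerProductSpace ℝ V] where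
  /-- the set of roots -/
  Δ : Finset V
  /-- the set of simple roots (the base) -/
  Δ0 : Finset V
  base_sub : Δ0 ⊆ Δ
  ne_zero : ∀ β ∈ Δ, β ≠ (0 : V)
  indep : LinearIndependent ℝ (fun a : ↥Δ0 => (a : V))
  neg_mem : ∀ β ∈ Δ, -β ∈ Δ
  /-- `coeff β α` is the coefficient `n_α` of the simple root `α` in `β = ∑ n_α • α` -/
  coeff : V → V → ℤ
  coeff_spec : ∀ β ∈ Δ, β = ∑ α ∈ Δ0, (coeff β α : ℝ) • α
  coeff_sign : ∀ β ∈ Δ, (∀ α ∈ Δ0, 0 ≤ coeff β α) ∨ (∀ α ∈ Δ0, coeff β α ≤ 0)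
  crystal : ∀ α ∈ Δ, ∀ β ∈ Δ, ∃ k : ℤ, 2 * ⟪β, α⟫ / ⟪α, α⟫ = (k : ℝ)
  reflect_mem : ∀ α ∈ Δ, ∀ β ∈ Δ, β - (2 * ⟪β, α⟫ / ⟪α, α⟫) • α ∈ Δ
  reduced : ∀ α ∈ Δ, (2 : ℝ) • α ∉ Δ

namespace RootSystemBase

variable {V : Type*} [NormedAddCommGroup V] [InnerProductSpace ℝ V]

variable (R : RootSystemBase V)

/-- The height `ht_Σ(β)` of a root `β` relative to a subset `Sg` of the simple roots. -/
def ht (Sg : Finset V) (β : V) : ℤ := ∑ α ∈ Sg, R.coeff β α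

/-- positive roots -/
def IsPos (β : V) : Prop := β ∈ R.Δ ∧ ∀ α ∈ R.Δ0, 0 ≤ R.coeff β α

/-- negative roots -/
def IsNeg (β : V) : Prop := β ∈ R.Δ ∧ ∀ α ∈ R.Δ0, R.coeff β α ≤ 0

/-- Irreducibility of the root system (the Dynkin diagram is connected); this is
equivalent to the corresponding complex Lie algebra being simple. -/
def Irred : Prop :=
  ¬ ∃ S : Finset V, S ⊆ R.Δ0 ∧ S.Nonempty ∧ S ≠ R.Δ0 ∧
      ∀ a ∈ S, ∀ b ∈ R.Δ0, b ∉ S → ⟪a, b⟫ = 0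

/-- Adjacency of two (simple) roots in the Dynkin diagram. -/
def Adj (a b : V) : Prop := a ≠ b ∧ ⟪a, b⟫ ≠ 0

end RootSystemBase

/-!
Call a subset `S` of the simple roots a root set if `∑ α ∈ S, α` is a root. That root is
positive, its `Sg`-height is `#(Sg ∩ S)`, and distinct root sets give distinct roots. Since
simple roots are pairwise obtuse, irreducibility lets every proper root set grow by one
adjacent simple root. If `#Sg ≥ 3`, the singletons of `Sg` give three roots of height one; if
`#Sg = 2`, growing a simple root outside `Sg` until it first meets `Sg` gives a third; if
`Sg = {a}`, a chain `{a} ⊂ S₂ ⊂ ⋯ ⊂ Sₙ` of root sets gives `n = rank` of them. In rank one the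
simple root is the only positive root of height one, so two such roots force rank two.
-/

namespace RootSystemBase

variable {V : Type*} [NormedAddCommGroup V] [InnerProductSpace ℝ V] (R : RootSystemBase V)

theorem eq_zero_of_sum_smul_eq_zero {f : V → ℝ} (h : ∑ α ∈ R.Δ0, f α • α = 0) :
    ∀ α ∈ R.Δ0, f α = 0 :=
  (linearIndepOn_iff' (v := id) (s := (R.Δ0 : Set V))).mp R.indep R.Δ0 f subset_rfl h

theorem coeff_eq_of_eq_sum {β : V} (hβ : β ∈ R.Δ) {f : V → ℝ}
    (hf : β = ∑ α ∈ R.Δ0, f α • α) : ∀ α ∈ R.Δ0, (R.coeff β α : ℝ) = f α := by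
  have h : ∑ α ∈ R.Δ0, ((R.coeff β α : ℝ) - f α) • α = 0 := by
    simp only [sub_smul, Finset.sum_sub_distrib, ← R.coeff_spec β hβ, ← hf, sub_self]
  exact fun α hα => sub_eq_zero.mp (R.eq_zero_of_sum_smul_eq_zero h α hα)

variable {R} in
theorem add_mem_of_inner_neg {α β : V} (hα : α ∈ R.Δ) (hβ : β ∈ R.Δ) (hneg : ⟪β, α⟫ < 0)
    (hne : β ≠ -α) : β + α ∈ R.Δ := by
  have hαα : 0 < ⟪α, α⟫ := real_inner_self_pos.mpr (R.ne_zero α hα)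
  have hββ : 0 < ⟪β, β⟫ := real_inner_self_pos.mpr (R.ne_zero β hβ)
  obtain ⟨k, hk⟩ := R.crystal α hα β hβ
  obtain ⟨l, hl⟩ := R.crystal β hβ α hα
  rw [real_inner_comm] at hl
  by_cases hk1 : k = -1
  · have := R.reflect_mem α hα β hβ
    rwa [hk, hk1, Int.cast_neg, Int.cast_one, neg_one_smul, sub_neg_eq_add] at this
  by_cases hl1 : l = -1
  · have := R.reflect_mem β hβ α hα
    rwa [real_inner_comm, hl, hl1, Int.cast_neg, Int.cast_one, neg_one_smul, sub_neg_eq_add,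
      add_comm] at this
  -- both Cartan integers are negative and `≠ -1`, hence `≤ -2`, which forces `‖β + α‖² ≤ 0`
  have hk2 : (k : ℝ) ≤ -2 := by
    have : k < 0 := by exact_mod_cast hk ▸ div_neg_of_neg_of_pos (by linarith) hαα
    exact_mod_cast (by omega : k ≤ -2)
  have hl2 : (l : ℝ) ≤ -2 := by
    have : l < 0 := by exact_mod_cast hl ▸ div_neg_of_neg_of_pos (by linarith) hββ
    exact_mod_cast (by omega : l ≤ -2)
  rw [← hk, div_le_iff₀ hαα] at hk2
  rw [← hl, div_le_iff₀ hββ] at hl2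
  have hsq : ⟪β + α, β + α⟫ ≤ 0 := by
    rw [inner_add_add_self, real_inner_comm β α]
    linarith
  exact absurd (eq_neg_of_add_eq_zero_left (real_inner_self_nonpos.mp hsq)) hne

theorem sum_eq_sum_indicator_smul {S : Finset V} (hS : S ⊆ R.Δ0) :
    ∑ α ∈ S, α = ∑ α ∈ R.Δ0, (if α ∈ S then (1 : ℝ) else 0) • α := by
  simp only [ite_smul, one_smul, zero_smul, Finset.sum_ite_mem, Finset.inter_eq_right.mpr hS]

theorem sum_injOn : Set.InjOn (fun S : Finset V => ∑ α ∈ S, α) {S | S ⊆ R.Δ0} := by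
  intro S₁ hS₁ S₂ hS₂ h
  have hdiff : ∑ α ∈ R.Δ0,
      ((if α ∈ S₁ then (1 : ℝ) else 0) - if α ∈ S₂ then 1 else 0) • α = 0 := by
    simp only [sub_smul, Finset.sum_sub_distrib, ← R.sum_eq_sum_indicator_smul hS₁,
      ← R.sum_eq_sum_indicator_smul hS₂]
    exact sub_eq_zero.mpr h
  ext δ
  by_cases hδ : δ ∈ R.Δ0
  · have := R.eq_zero_of_sum_smul_eq_zero hdiff δ hδ
    split_ifs at this <;> simp_all
  · exact iff_of_false (fun h => hδ (hS₁ h)) (fun h => hδ (hS₂ h))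

variable {R} in
theorem inner_nonpos_of_mem_base {α β : V} (hα : α ∈ R.Δ0) (hβ : β ∈ R.Δ0) (hne : α ≠ β) :
    ⟪α, β⟫ ≤ 0 := by
  by_contra! hpos
  have hmem : α - β ∈ R.Δ := by
    simpa only [sub_eq_add_neg] using add_mem_of_inner_neg (R.neg_mem β (R.base_sub hβ))
      (R.base_sub hα) (by rwa [inner_neg_right, neg_lt_zero]) (by rwa [neg_neg])
  -- `α - β` would be a root whose coefficients `1` and `-1` have opposite signs
  have hcoeff := R.coeff_eq_of_eq_sum hmem
    (f := fun δ => (if δ = α then 1 else 0) - if δ = β then 1 else 0) (by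
      simp only [sub_smul, Finset.sum_sub_distrib, ite_smul, one_smul, zero_smul,
        Finset.sum_ite_eq', if_pos hα, if_pos hβ])
  have hcα : (R.coeff (α - β) α : ℝ) = 1 := by simpa [hne] using hcoeff α hα
  have hcβ : (R.coeff (α - β) β : ℝ) = -1 := by simpa [hne.symm] using hcoeff β hβ
  norm_cast at hcα hcβ
  rcases R.coeff_sign _ hmem with hs | hs
  · exact absurd (hs β hβ) (by omega)
  · exact absurd (hs α hα) (by omega)

noncomputable def heightOneRoots (Sg : Finset V) : Finset V :=
  R.Δ.filter fun β => R.IsPos β ∧ R.ht Sg β = 1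

theorem heightOneRoots_base_subset : R.heightOneRoots R.Δ0 ⊆ R.Δ0 := by
  intro β hβ
  obtain ⟨hβΔ, ⟨-, hpos⟩, hht⟩ := Finset.mem_filter.mp hβ
  obtain ⟨α, hα, hcα⟩ := Finset.exists_ne_zero_of_sum_ne_zero (hht.trans_ne one_ne_zero)
  rw [ht, ← Finset.add_sum_erase _ _ hα] at hht
  have hrest_nonneg : ∀ δ ∈ R.Δ0.erase α, 0 ≤ R.coeff β δ :=
    fun δ hδ => hpos δ (Finset.mem_of_mem_erase hδ)
  have hrest_sum := Finset.sum_nonneg hrest_nonneg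
  have hcoeff_α : R.coeff β α = 1 := by have := hpos α hα; omega
  have hrest : ∀ δ ∈ R.Δ0, δ ≠ α → R.coeff β δ = 0 := fun δ hδ hδα =>
    (Finset.sum_eq_zero_iff_of_nonneg hrest_nonneg).mp (by omega) δ
      (Finset.mem_erase.mpr ⟨hδα, hδ⟩)
  rw [R.coeff_spec β hβΔ, Finset.sum_eq_single_of_mem α hα fun δ hδ hδα => by
    rw [hrest δ hδ hδα, Int.cast_zero, zero_smul], hcoeff_α, Int.cast_one, one_smul]
  exact hα

def IsRootSet (S : Finset V) : Prop := S ⊆ R.Δ0 ∧ ∑ α ∈ S, α ∈ R.Δ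

variable {R}

theorem isRootSet_singleton {a : V} (ha : a ∈ R.Δ0) : R.IsRootSet {a} :=
  ⟨Finset.singleton_subset_iff.mpr ha, by rw [Finset.sum_singleton]; exact R.base_sub ha⟩

namespace IsRootSet

variable {S : Finset V}

theorem nonempty (hS : R.IsRootSet S) : S.Nonempty := by
  rw [Finset.nonempty_iff_ne_empty]
  rintro rfl
  exact R.ne_zero _ hS.2 Finset.sum_empty

theorem coeff_sum (hS : R.IsRootSet S) {δ : V} (hδ : δ ∈ R.Δ0) :
    R.coeff (∑ α ∈ S, α) δ = if δ ∈ S then 1 else 0 := by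
  have := R.coeff_eq_of_eq_sum hS.2 (R.sum_eq_sum_indicator_smul hS.1) δ hδ
  split_ifs at this ⊢ <;> exact_mod_cast this

theorem isPos (hS : R.IsRootSet S) : R.IsPos (∑ α ∈ S, α) :=
  ⟨hS.2, fun δ hδ => by rw [hS.coeff_sum hδ]; split_ifs <;> norm_num⟩

theorem ht_sum (hS : R.IsRootSet S) {Sg : Finset V} (hSg : Sg ⊆ R.Δ0) :
    R.ht Sg (∑ α ∈ S, α) = (Sg ∩ S).card := by
  rw [ht, Finset.sum_congr rfl fun δ hδ => hS.coeff_sum (hSg hδ), Finset.sum_boole]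
  simp [Finset.filter_mem_eq_inter]

theorem exists_insert (hS : R.IsRootSet S) (hirr : R.Irred) (hS' : S ≠ R.Δ0) :
    ∃ γ ∈ R.Δ0, γ ∉ S ∧ R.IsRootSet (insert γ S) := by
  obtain ⟨γ, hγ, hγS, s, hs, hsγ⟩ : ∃ γ ∈ R.Δ0, γ ∉ S ∧ ∃ s ∈ S, ⟪s, γ⟫ ≠ 0 := by
    by_contra! h
    exact hirr ⟨S, hS.1, hS.nonempty, hS', fun a ha b hb hbS => h b hb hbS a ha⟩
  have hobtuse : ∀ x ∈ S, ⟪x, γ⟫ ≤ 0 :=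
    fun x hx => inner_nonpos_of_mem_base (hS.1 hx) hγ fun h => hγS (h ▸ hx)
  have hneg : ⟪∑ α ∈ S, α, γ⟫ < 0 := by
    rw [sum_inner]
    exact Finset.sum_neg' hobtuse ⟨s, hs, (hobtuse s hs).lt_of_ne hsγ⟩
  have hsub : insert γ S ⊆ R.Δ0 := Finset.insert_subset hγ hS.1
  have hne : ∑ α ∈ S, α ≠ -γ := by
    intro h
    refine Finset.insert_ne_empty γ S (R.sum_injOn hsub (Finset.empty_subset _) ?_)
    simp [Finset.sum_insert hγS, h]
  refine ⟨γ, hγ, hγS, hsub, ?_⟩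
  rw [Finset.sum_insert hγS, add_comm]
  exact add_mem_of_inner_neg (R.base_sub hγ) hS.2 hneg hne

theorem exists_superset_card (hS : R.IsRootSet S) (hirr : R.Irred) {n : ℕ}
    (hn : S.card + n ≤ R.Δ0.card) : ∃ T, S ⊆ T ∧ R.IsRootSet T ∧ T.card = S.card + n := by
  induction n with
  | zero => exact ⟨S, subset_rfl, hS, rfl⟩
  | succ n ih =>
    obtain ⟨T, hST, hT, hTcard⟩ := ih (by omega)
    obtain ⟨γ, -, hγT, hγ⟩ := hT.exists_insert hirr fun h => by rw [h] at hTcard; omega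
    refine ⟨insert γ T, hST.trans (Finset.subset_insert γ T), hγ, ?_⟩
    rw [Finset.card_insert_of_notMem hγT, hTcard, add_assoc]

theorem exists_superset_inter_card_eq_one (hS : R.IsRootSet S) (hirr : R.Irred)
    {Sg : Finset V} (hSg : Sg ⊆ R.Δ0) (hSgne : Sg.Nonempty) (hdisj : Disjoint S Sg) :
    ∃ T, S ⊆ T ∧ R.IsRootSet T ∧ (Sg ∩ T).card = 1 := by
  -- a largest root set containing `S` and avoiding `Sg` can only grow into `Sg`
  obtain ⟨T, hT, hmax⟩ :=
    (R.Δ0.powerset.filter fun T => S ⊆ T ∧ R.IsRootSet T ∧ Disjoint T Sg).exists_max_image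
      Finset.card ⟨S, by simp [hS.1, hS, hdisj]⟩
  simp only [Finset.mem_filter, Finset.mem_powerset] at hT hmax
  obtain ⟨-, hST, hTroot, hTdisj⟩ := hT
  have hTne : T ≠ R.Δ0 := by
    rintro rfl
    obtain ⟨a, ha⟩ := hSgne
    exact Finset.disjoint_left.mp hTdisj (hSg ha) ha
  obtain ⟨γ, -, hγT, hγroot⟩ := hTroot.exists_insert hirr hTne
  have hγSg : γ ∈ Sg := by
    by_contra hγSg
    have := hmax (insert γ T) ⟨hγroot.1, hST.trans (Finset.subset_insert _ _), hγroot,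
      Finset.disjoint_insert_left.mpr ⟨hγSg, hTdisj⟩⟩
    rw [Finset.card_insert_of_notMem hγT] at this
    omega
  refine ⟨insert γ T, hST.trans (Finset.subset_insert _ _), hγroot, ?_⟩
  rw [Finset.inter_insert_of_mem hγSg, Finset.inter_comm,
    Finset.disjoint_iff_inter_eq_empty.mp hTdisj, insert_empty_eq, Finset.card_singleton]

end IsRootSet

variable {Sg : Finset V}

theorem card_le_card_heightOneRoots (hSg : Sg ⊆ R.Δ0) {𝒮 : Finset (Finset V)}
    (h𝒮 : ∀ S ∈ 𝒮, R.IsRootSet S ∧ (Sg ∩ S).card = 1) : 𝒮.card ≤ (R.heightOneRoots Sg).card :=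
  Finset.card_le_card_of_injOn (fun S => ∑ α ∈ S, α)
    (fun S hS => Finset.mem_filter.mpr ⟨(h𝒮 S hS).1.2, (h𝒮 S hS).1.isPos, by
      rw [(h𝒮 S hS).1.ht_sum hSg, (h𝒮 S hS).2, Nat.cast_one]⟩)
    (R.sum_injOn.mono fun S hS => (h𝒮 S hS).1.1)

theorem card_le_card_heightOneRoots_self (hSg : Sg ⊆ R.Δ0) :
    Sg.card ≤ (R.heightOneRoots Sg).card := by
  rw [← Finset.card_image_of_injective Sg Finset.singleton_injective]
  refine card_le_card_heightOneRoots hSg (Finset.forall_mem_image.mpr fun a ha => ?_)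
  exact ⟨isRootSet_singleton (hSg ha), by
    rw [Finset.inter_singleton_of_mem ha, Finset.card_singleton]⟩

theorem card_lt_card_heightOneRoots (hirr : R.Irred) (hSg : Sg ⊆ R.Δ0) (hne : Sg.Nonempty)
    (hSg' : Sg ≠ R.Δ0) : Sg.card < (R.heightOneRoots Sg).card := by
  obtain ⟨γ, hγ, hγSg⟩ := Finset.exists_of_ssubset (hSg.ssubset_of_ne hSg')
  obtain ⟨T, hγT, hT, hTcard⟩ := (isRootSet_singleton hγ).exists_superset_inter_card_eq_one
    hirr hSg hne (Finset.disjoint_singleton_left.mpr hγSg)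
  have hTnot : T ∉ Sg.image singleton := by
    simp only [Finset.mem_image, not_exists, not_and]
    rintro a ha rfl
    exact hγSg (Finset.mem_singleton.mp (hγT (Finset.mem_singleton_self γ)) ▸ ha)
  calc Sg.card < (insert T (Sg.image singleton)).card := by
        rw [Finset.card_insert_of_notMem hTnot,
          Finset.card_image_of_injective Sg Finset.singleton_injective]
        exact Nat.lt_succ_self _
    _ ≤ (R.heightOneRoots Sg).card := by
        refine card_le_card_heightOneRoots hSg ((Finset.forall_mem_insert _ _ _).mpr
          ⟨⟨hT, hTcard⟩, Finset.forall_mem_image.mpr fun a ha => ?_⟩)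
        exact ⟨isRootSet_singleton (hSg ha), by
          rw [Finset.inter_singleton_of_mem ha, Finset.card_singleton]⟩

theorem card_base_le_card_heightOneRoots_singleton (hirr : R.Irred) {a : V} (ha : a ∈ R.Δ0) :
    R.Δ0.card ≤ (R.heightOneRoots {a}).card := by
  have hchain : ∀ k ∈ Finset.range R.Δ0.card, ∃ T, {a} ⊆ T ∧ R.IsRootSet T ∧ T.card = 1 + k :=
    fun k hk => (isRootSet_singleton ha).exists_superset_card hirr (by
      rw [Finset.mem_range] at hk; rw [Finset.card_singleton]; omega)
  choose! T haT hT hTcard using hchain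
  have hinj : Set.InjOn T (Finset.range R.Δ0.card) := fun k hk l hl h => by
    have := hTcard k hk; have := hTcard l hl; rw [h] at *; omega
  rw [← Finset.card_range R.Δ0.card, ← Finset.card_image_of_injOn hinj]
  refine card_le_card_heightOneRoots (Finset.singleton_subset_iff.mpr ha)
    (Finset.forall_mem_image.mpr fun k hk => ⟨hT k hk, ?_⟩)
  rw [Finset.inter_eq_left.mpr (haT k hk), Finset.card_singleton]

theorem three_le_card_heightOneRoots (hirr : R.Irred) (hrank : 3 ≤ R.Δ0.card)
    (hSg : Sg ⊆ R.Δ0) (hne : Sg.Nonempty) : 3 ≤ (R.heightOneRoots Sg).card := by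
  obtain h1 | h2 | h3 : Sg.card = 1 ∨ Sg.card = 2 ∨ 3 ≤ Sg.card := by
    have := hne.card_pos; omega
  · obtain ⟨a, rfl⟩ := Finset.card_eq_one.mp h1
    exact hrank.trans
      (card_base_le_card_heightOneRoots_singleton hirr (hSg (Finset.mem_singleton_self a)))
  · have hSg' : Sg ≠ R.Δ0 := by rintro rfl; omega
    have := card_lt_card_heightOneRoots hirr hSg hne hSg'
    omega
  · exact h3.trans (card_le_card_heightOneRoots_self hSg)

end RootSystemBase

/-- For the grading of a complex simple Lie algebra determined by a
nonempty subset `Sg` of the simple roots, `dim 𝔤₋₁` equals the number of positive roots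
of `Sg`-height `1`.  If this number is `2` then the rank is `2`; equivalently, if the
rank is at least `3`, then for every nonempty subset `Sg` of the simple roots there are
at least `3` positive roots of `Sg`-height `1`. -/
theorem statement0 {V : Type*} [NormedAddCommGroup V] [InnerProductSpace ℝ V]
    (R : RootSystemBase V) (hirr : R.Irred) :
    (∀ Sg : Finset V, Sg ⊆ R.Δ0 → Sg.Nonempty →
        (R.Δ.filter (fun β => R.IsPos β ∧ R.ht Sg β = 1)).card = 2 → R.Δ0.card = 2) ∧
    (3 ≤ R.Δ0.card → ∀ Sg : Finset V, Sg ⊆ R.Δ0 → Sg.Nonempty →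
        3 ≤ (R.Δ.filter (fun β => R.IsPos β ∧ R.ht Sg β = 1)).card) := by
  have hrank3 : 3 ≤ R.Δ0.card → ∀ Sg : Finset V, Sg ⊆ R.Δ0 → Sg.Nonempty →
      3 ≤ (R.heightOneRoots Sg).card :=
    fun hrank _ hSg hne => RootSystemBase.three_le_card_heightOneRoots hirr hrank hSg hne
  refine ⟨fun Sg hSg hne hcard => ?_, hrank3⟩
  change (R.heightOneRoots Sg).card = 2 at hcard
  have hrank_pos : 0 < R.Δ0.card := (hne.mono hSg).card_pos
  have hrank_ne_one : R.Δ0.card ≠ 1 := by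
    intro hrank
    obtain rfl : Sg = R.Δ0 := Finset.eq_of_subset_of_card_le hSg (hrank ▸ hne.card_pos)
    have := Finset.card_le_card R.heightOneRoots_base_subset
    omega
  have hrank_lt : R.Δ0.card < 3 := by
    by_contra! hrank
    have := hrank3 hrank Sg hSg hne
    omega
  omega
end

section
/- Let Δ be the root system of a complex simple Lie algebra with base of simple roots Δ⁰, and let Σ ⊆ Δ⁰ be a nonempty subset containing a root ζ which is adjacent in the Dynkin diagram to every other root of Σ. If α, α′ ∈ Σ∖{ζ} with α ≠ α′, β ∈ Υ¹_α and β′ ∈ Υ¹_{α′}, then β + β′ is not a root. -/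
open scoped RealInnerProductSpace BigOperators Classical

namespace RootSystemBase

variable {V : Type*} [NormedAddCommGroup V] [InnerProductSpace ℝ V]

variable (R : RootSystemBase V)

/-- `R.comp ζ α` is the connected component containing `α` of the Dynkin diagram of
`Δ⁰ ∖ {ζ}`:  all simple roots `γ ≠ ζ` joined to `α` by a path of adjacent simple
roots avoiding `ζ`. -/
def comp (ζ α : V) : Set V :=
  {γ : V | γ ∈ R.Δ0 ∧ γ ≠ ζ ∧
    Relation.ReflTransGen
      (fun u w => u ∈ R.Δ0 ∧ w ∈ R.Δ0 ∧ u ≠ ζ ∧ w ≠ ζ ∧ Adj u w) α γ}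

/-- `Υ¹_α`: the roots of the form `β = α + ∑ nᵢ βᵢ` with `βᵢ ∈ Υ_α ∖ {α}` and
`nᵢ > 0` (`m ≥ 0` summands); equivalently the roots of `{α}`-height one in the
subsystem with simple roots `Υ_α`. -/
def Ups1 (ζ α : V) : Set V :=
  {β : V | β ∈ R.Δ ∧ ∃ n : V → ℕ,
      (∀ γ : V, n γ ≠ 0 → γ ∈ R.comp ζ α ∧ γ ≠ α) ∧
      β = α + ∑ γ ∈ R.Δ0, (n γ : ℝ) • γ}

end RootSystemBase

/-!
The Dynkin diagram has no cycles: if `v` is the sum of the distinct simple roots of a cycle, then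
`⟪v, v⟫ ≤ 0`, because adjacent simple roots `a ≠ b` satisfy `2 ⟪a, b⟫ ≤ -⟪b, b⟫` and all other
pairs are obtuse. Hence `α` and `α'`, both adjacent to `ζ`, lie in different components of the
diagram of `Δ⁰ ∖ {ζ}`. Distinct components are orthogonal, so `⟪β, β'⟫ = 0`, and if `β + β'` were
a root, its reflection in `β` would be the root `β' - β`, whose coordinates are `-1` at `α` and
`1` at `α'`.
-/

theorem SimpleGraph.Walk.forall_mem_support_of_adj {V : Type*} {G : SimpleGraph V}
    (P : V → Prop) (hP : ∀ u w, G.Adj u w → P u) {u v : V} (hv : P v) (p : G.Walk u v) :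
    ∀ x ∈ p.support, P x := by
  induction p with
  | nil => simpa using hv
  | cons h q ih => simpa [hP _ _ h] using ih hv

namespace RootSystemBase

variable {V : Type*} [NormedAddCommGroup V] [InnerProductSpace ℝ V] (R : RootSystemBase V)

theorem Adj.symm {a b : V} (h : Adj a b) : Adj b a :=
  ⟨h.1.symm, by rw [real_inner_comm]; exact h.2⟩

theorem linearIndepOn_base : LinearIndepOn ℝ id (R.Δ0 : Set V) := R.indep

def dynkin : SimpleGraph V where
  Adj u w := u ∈ R.Δ0 ∧ w ∈ R.Δ0 ∧ Adj u w
  symm := ⟨fun _ _ ⟨hu, hw, hadj⟩ => ⟨hw, hu, hadj.symm⟩⟩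
  loopless := ⟨fun _ h => h.2.2.1 rfl⟩

def dynkinAway (ζ : V) : SimpleGraph V where
  Adj u w := u ∈ R.Δ0 ∧ w ∈ R.Δ0 ∧ u ≠ ζ ∧ w ≠ ζ ∧ Adj u w
  symm := ⟨fun _ _ ⟨hu, hw, huζ, hwζ, hadj⟩ => ⟨hw, hu, hwζ, huζ, hadj.symm⟩⟩
  loopless := ⟨fun _ h => h.2.2.2.2.1 rfl⟩

theorem dynkinAway_le_dynkin (ζ : V) : R.dynkinAway ζ ≤ R.dynkin :=
  fun _ _ ⟨hu, hw, _, _, hadj⟩ => ⟨hu, hw, hadj⟩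

theorem mem_comp_iff {ζ α γ : V} :
    γ ∈ R.comp ζ α ↔ γ ∈ R.Δ0 ∧ γ ≠ ζ ∧ (R.dynkinAway ζ).Reachable α γ := by
  rw [SimpleGraph.reachable_iff_reflTransGen]
  rfl

theorem coeff_eq_of_eq_sum_s7 {β : V} (hβ : β ∈ R.Δ) (c : V → ℝ)
    (hc : β = ∑ γ ∈ R.Δ0, c γ • γ) {γ : V} (hγ : γ ∈ R.Δ0) : (R.coeff β γ : ℝ) = c γ := by
  have hzero : ∑ γ ∈ R.Δ0, ((R.coeff β γ : ℝ) - c γ) • γ = 0 := by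
    simp only [sub_smul, Finset.sum_sub_distrib]
    rw [← R.coeff_spec β hβ, ← hc, sub_self]
  exact sub_eq_zero.1 (linearIndepOn_finset_iff.1 R.linearIndepOn_base _ hzero γ hγ)

theorem notMem_of_eq_sum_of_neg_of_pos {x : V} (c : V → ℝ) (hx : x = ∑ γ ∈ R.Δ0, c γ • γ)
    {a b : V} (ha : a ∈ R.Δ0) (hb : b ∈ R.Δ0) (hca : c a < 0) (hcb : 0 < c b) : x ∉ R.Δ := by
  intro hxΔ
  have hxa := R.coeff_eq_of_eq_sum_s7 hxΔ c hx ha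
  have hxb := R.coeff_eq_of_eq_sum_s7 hxΔ c hx hb
  rcases R.coeff_sign x hxΔ with hnonneg | hnonpos
  · have : (0 : ℝ) ≤ R.coeff x a := by exact_mod_cast hnonneg a ha
    linarith
  · have : (R.coeff x b : ℝ) ≤ 0 := by exact_mod_cast hnonpos b hb
    linarith

theorem sum_ne_zero_of_subset_base {S : Finset V} (hS : S ⊆ R.Δ0) (hne : S.Nonempty) :
    ∑ s ∈ S, s ≠ 0 := by
  intro hzero
  have hli : LinearIndepOn ℝ id (S : Set V) := R.linearIndepOn_base.mono (by exact_mod_cast hS)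
  obtain ⟨s, hs⟩ := hne
  simpa using linearIndepOn_finset_iff.1 hli (fun _ => 1) (by simpa using hzero) s hs

theorem inner_nonpos_of_ne {a b : V} (ha : a ∈ R.Δ0) (hb : b ∈ R.Δ0) (hab : a ≠ b) :
    ⟪a, b⟫ ≤ 0 := by
  by_contra! hpos
  have haa : 0 < ⟪a, a⟫ := real_inner_self_pos.2 (R.ne_zero a (R.base_sub ha))
  set k := 2 * ⟪b, a⟫ / ⟪a, a⟫
  have hk : 0 < k := by rw [real_inner_comm] at hpos; positivity
  -- the reflection `b - k • a` of `b` in `a` would have coordinates `-k` at `a` and `1` at `b`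
  have hrefl : b - k • a =
      ∑ γ ∈ R.Δ0, ((if γ = b then 1 else 0) - k * if γ = a then 1 else 0) • γ := by
    simp [sub_smul, Finset.sum_sub_distrib, ha, hb]
  exact R.notMem_of_eq_sum_of_neg_of_pos _ hrefl ha hb (by simp [hab, hk])
    (by simp [Ne.symm hab]) (R.reflect_mem a (R.base_sub ha) b (R.base_sub hb))

theorem two_mul_inner_le_neg_inner_self {a b : V} (ha : a ∈ R.Δ0) (hb : b ∈ R.Δ0)
    (hab : Adj a b) : 2 * ⟪a, b⟫ ≤ -⟪b, b⟫ := by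
  obtain ⟨k, hk⟩ := R.crystal b (R.base_sub hb) a (R.base_sub ha)
  have hbb : 0 < ⟪b, b⟫ := real_inner_self_pos.2 (R.ne_zero b (R.base_sub hb))
  have hab' : ⟪a, b⟫ < 0 := lt_of_le_of_ne (R.inner_nonpos_of_ne ha hb hab.1) hab.2
  have hk_neg : (k : ℝ) < 0 := by rw [← hk]; exact div_neg_of_neg_of_pos (by linarith) hbb
  have hk_le : (k : ℝ) ≤ -1 := by
    have : k < 0 := by exact_mod_cast hk_neg
    exact_mod_cast (by omega : k ≤ -1)
  have heq : 2 * ⟪a, b⟫ = k * ⟪b, b⟫ := by field_simp at hk; linarith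
  nlinarith

theorem inner_sum_le_sum_inner {x : V} (hx : x ∈ R.Δ0) {S T : Finset V} (hS : S ⊆ R.Δ0)
    (hxS : x ∉ S) (hTS : T ⊆ S) : ⟪x, ∑ s ∈ S, s⟫ ≤ ∑ t ∈ T, ⟪x, t⟫ := by
  have hrest : ∑ s ∈ S \ T, ⟪x, s⟫ ≤ 0 := Finset.sum_nonpos fun s hs =>
    have hsS := (Finset.mem_sdiff.1 hs).1
    R.inner_nonpos_of_ne hx (hS hsS) fun h => hxS (h ▸ hsS)
  rw [inner_sum, ← Finset.sum_sdiff hTS]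
  linarith

theorem inner_sum_support_le {G : SimpleGraph V} (hG : G ≤ R.dynkin) {a b : V}
    (p : G.Walk a b) (hp : p.IsPath) (hb : b ∈ R.Δ0) :
    ⟪∑ s ∈ p.support.toFinset, s, ∑ s ∈ p.support.toFinset, s⟫ ≤ ⟪b, b⟫ := by
  induction p with
  | nil => simp
  | @cons x a b h q ih =>
    rw [SimpleGraph.Walk.cons_isPath_iff] at hp
    obtain ⟨hx, ha, hxa⟩ := hG h
    have hS : q.support.toFinset ⊆ R.Δ0 := fun y hy =>
      q.forall_mem_support_of_adj (· ∈ R.Δ0) (fun _ _ h => (hG h).1) hb y (by simpa using hy)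
    have hxS : x ∉ q.support.toFinset := by simpa using hp.2
    have hxq := R.inner_sum_le_sum_inner hx hS hxS (T := {a}) (by simp)
    have hxa' := R.two_mul_inner_le_neg_inner_self ha hx hxa.symm
    rw [real_inner_comm] at hxa'
    rw [Finset.sum_singleton] at hxq
    rw [SimpleGraph.Walk.support_cons, List.toFinset_cons, Finset.sum_insert hxS,
      real_inner_add_add_self]
    linarith [ih hp.1 hb]

-- The Dynkin diagram has no cycle through `ζ`.
theorem not_reachable_dynkinAway {ζ α α' : V} (hζ : ζ ∈ R.Δ0) (hα : α ∈ R.Δ0)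
    (hα' : α' ∈ R.Δ0) (hαα' : α ≠ α') (hζα : Adj ζ α) (hζα' : Adj ζ α') :
    ¬ (R.dynkinAway ζ).Reachable α α' := by
  rintro ⟨w⟩
  set p := w.toPath
  set S := (p : (R.dynkinAway ζ).Walk α α').support.toFinset
  have hS : ∀ y ∈ S, y ∈ R.Δ0 ∧ y ≠ ζ := fun y hy =>
    (p : (R.dynkinAway ζ).Walk α α').forall_mem_support_of_adj (fun y => y ∈ R.Δ0 ∧ y ≠ ζ)
      (fun _ _ (h : (R.dynkinAway ζ).Adj _ _) => ⟨h.1, h.2.2.1⟩) ⟨hα', hζα'.1.symm⟩ y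
      (by simpa [S] using hy)
  have hζS : ζ ∉ S := fun h => (hS ζ h).2 rfl
  have hpair : {α, α'} ⊆ S := by simp [Finset.insert_subset_iff, S]
  have hsum := R.inner_sum_le_sum_inner hζ (fun y hy => (hS y hy).1) hζS hpair
  rw [Finset.sum_pair hαα'] at hsum
  have hpath := R.inner_sum_support_le (R.dynkinAway_le_dynkin ζ) _ p.2 hα'
  have h₁ := R.two_mul_inner_le_neg_inner_self hα hζ hζα.symm
  have h₂ := R.two_mul_inner_le_neg_inner_self hζ hα' hζα'
  -- the vector `ζ + ∑ S` would be nonzero of nonpositive length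
  have hpos : 0 < ⟪ζ + ∑ s ∈ S, s, ζ + ∑ s ∈ S, s⟫ := by
    rw [real_inner_self_pos, ← Finset.sum_insert hζS (f := fun s => s)]
    exact R.sum_ne_zero_of_subset_base
      (Finset.insert_subset hζ fun y hy => (hS y hy).1) (Finset.insert_nonempty _ _)
  rw [real_inner_add_add_self] at hpos
  rw [real_inner_comm] at h₁
  linarith

theorem span_comp_isOrtho {ζ α α' : V} (h : ¬ (R.dynkinAway ζ).Reachable α α') :
    Submodule.span ℝ (R.comp ζ α) ⟂ Submodule.span ℝ (R.comp ζ α') := by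
  rw [Submodule.isOrtho_span]
  intro u hu v hv
  rw [mem_comp_iff] at hu hv
  by_contra huv
  have hreach : (R.dynkinAway ζ).Reachable u v := by
    by_cases heq : u = v
    · exact heq ▸ SimpleGraph.Reachable.refl u
    · exact SimpleGraph.Adj.reachable ⟨hu.1, hv.1, hu.2.1, hv.2.1, heq, huv⟩
  exact h (hu.2.2.trans (hreach.trans hv.2.2.symm))

theorem exists_eq_sum_of_mem_Ups1 {ζ α β : V} (hα : α ∈ R.Δ0) (hαζ : α ≠ ζ)
    (hβ : β ∈ R.Ups1 ζ α) :
    ∃ c : V → ℝ, β = ∑ γ ∈ R.Δ0, c γ • γ ∧ c α = 1 ∧ ∀ γ, c γ ≠ 0 → γ ∈ R.comp ζ α := by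
  obtain ⟨-, n, hn, rfl⟩ := hβ
  have hnα : n α = 0 := by
    by_contra h
    exact (hn α h).2 rfl
  refine ⟨fun γ => (if γ = α then 1 else 0) + n γ, ?_, by simp [hnα], fun γ hγ => ?_⟩
  · simp [add_smul, Finset.sum_add_distrib, hα]
  · by_cases h : γ = α
    · exact h ▸ (⟨hα, hαζ, .refl⟩ : α ∈ R.comp ζ α)
    · exact (hn γ (by simpa [h] using hγ)).1

theorem mem_span_comp_of_mem_Ups1 {ζ α β : V} (hα : α ∈ R.Δ0) (hαζ : α ≠ ζ)
    (hβ : β ∈ R.Ups1 ζ α) : β ∈ Submodule.span ℝ (R.comp ζ α) := by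
  obtain ⟨c, rfl, -, hc⟩ := R.exists_eq_sum_of_mem_Ups1 hα hαζ hβ
  refine Submodule.sum_mem _ fun γ _ => ?_
  by_cases h : c γ = 0
  · simp [h]
  · exact Submodule.smul_mem _ _ (Submodule.subset_span (hc γ h))

theorem sub_mem_of_add_mem_of_inner_eq_zero {β β' : V} (hβ : β ∈ R.Δ) (hsum : β + β' ∈ R.Δ)
    (h : ⟪β, β'⟫ = 0) : β' - β ∈ R.Δ := by
  have hββ : ⟪β, β⟫ ≠ 0 := (real_inner_self_pos.2 (R.ne_zero β hβ)).ne'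
  convert R.reflect_mem β hβ _ hsum using 1
  rw [inner_add_left, real_inner_comm β β', h, add_zero, mul_div_assoc, div_self hββ, mul_one,
    two_smul]
  abel

end RootSystemBase

theorem statement7_general {V : Type*} [NormedAddCommGroup V] [InnerProductSpace ℝ V]
    (R : RootSystemBase V)
    (Sg : Finset V) (hSg : Sg ⊆ R.Δ0)
    (ζ : V) (hζ : ζ ∈ Sg) (hadj : ∀ a ∈ Sg, a ≠ ζ → RootSystemBase.Adj ζ a)
    (α α' : V) (hα : α ∈ Sg) (hα' : α' ∈ Sg) (hαζ : α ≠ ζ) (hα'ζ : α' ≠ ζ)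
    (hαα' : α ≠ α')
    (β β' : V) (hβ : β ∈ R.Ups1 ζ α) (hβ' : β' ∈ R.Ups1 ζ α') :
    β + β' ∉ R.Δ := by
  have hsep : ¬ (R.dynkinAway ζ).Reachable α α' :=
    R.not_reachable_dynkinAway (hSg hζ) (hSg hα) (hSg hα') hαα' (hadj α hα hαζ)
      (hadj α' hα' hα'ζ)
  obtain ⟨c, hβc, hcα, hc⟩ := R.exists_eq_sum_of_mem_Ups1 (hSg hα) hαζ hβ
  obtain ⟨c', hβ'c, hc'α', hc'⟩ := R.exists_eq_sum_of_mem_Ups1 (hSg hα') hα'ζ hβ'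
  have hcα' : c α' = 0 := not_not.1 fun h => hsep (R.mem_comp_iff.1 (hc α' h)).2.2
  have hc'α : c' α = 0 := not_not.1 fun h => hsep (R.mem_comp_iff.1 (hc' α h)).2.2.symm
  have horth : ⟪β, β'⟫ = 0 := (R.span_comp_isOrtho hsep).inner_eq
    (R.mem_span_comp_of_mem_Ups1 (hSg hα) hαζ hβ)
    (R.mem_span_comp_of_mem_Ups1 (hSg hα') hα'ζ hβ')
  intro hsum
  -- `β' - β` is a root with coordinate `-1` at `α` and `1` at `α'`
  refine R.notMem_of_eq_sum_of_neg_of_pos (fun γ => c' γ - c γ) ?_ (hSg hα) (hSg hα')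
    (by simp [hcα, hc'α]) (by simp [hcα', hc'α'])
    (R.sub_mem_of_add_mem_of_inner_eq_zero hβ.1 hsum horth)
  simp only [hβc, hβ'c, sub_smul, Finset.sum_sub_distrib]

/-- Let `Δ` be the root system of a complex simple Lie algebra with
base `Δ⁰`, and let `Σ ⊆ Δ⁰` be nonempty with a root `ζ` adjacent to every other root
of `Σ`.  If `α, α′ ∈ Σ∖{ζ}` are distinct, `β ∈ Υ¹_α` and `β′ ∈ Υ¹_{α′}`, then
`β + β′` is not a root. -/
theorem statement7 {V : Type*} [NormedAddCommGroup V] [InnerProductSpace ℝ V]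
    (R : RootSystemBase V) (hirr : R.Irred)
    (Sg : Finset V) (hSg : Sg ⊆ R.Δ0)
    (ζ : V) (hζ : ζ ∈ Sg) (hadj : ∀ a ∈ Sg, a ≠ ζ → RootSystemBase.Adj ζ a)
    (α α' : V) (hα : α ∈ Sg) (hα' : α' ∈ Sg) (hαζ : α ≠ ζ) (hα'ζ : α' ≠ ζ)
    (hαα' : α ≠ α')
    (β β' : V) (hβ : β ∈ R.Ups1 ζ α) (hβ' : β' ∈ R.Ups1 ζ α') :
    β + β' ∉ R.Δ :=
  statement7_general R Sg hSg ζ hζ hadj α α' hα hα' hαζ hα'ζ hαα' β β' hβ hβ'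
end
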